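/- Let n be a positive integer and b ∈ {0,…,n}. The size of the Varshamov–Tenengolts code VT_b(n) equals (1/(2(n+1))) ∑_{d ∣ n+1, d odd} c_d(b)·2^{(n+1)/d}. -/

import Mathlib

open Complex Finset

/-- The Ramanujan sum `c_n(m)`. -/
noncomputable def ramanujan (n : ℕ) (m : ℤ) : ℂ :=
  ∑ j ∈ (Finset.Icc 1 n).filter fun j => Nat.gcd j n = 1,
    Complex.exp (2 * Real.pi * Complex.I * ((j : ℂ) * m) / n)

/-- The Varshamov--Tenengolts code `VT_b(n)`. -/
def VT (n b : ℕ) : Finset (Fin n → Fin 2) :=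
  Finset.univ.filter fun s => (∑ i : Fin n, (i.val + 1) * (s i).val) % (n + 1) = b

open Polynomial

section aux

lemma prod_periodic {η : ℂ} {d : ℕ} (hd : η ^ d = 1) (c : ℕ) :
    ∏ i ∈ Finset.range (c * d), (1 + η ^ i) = (∏ i ∈ Finset.range d, (1 + η ^ i)) ^ c := by
  induction c with
  | zero => simp
  | succ c ih =>
    rw [add_mul, one_mul, Finset.prod_range_add, ih, pow_succ]
    congr 1
    refine Finset.prod_congr rfl fun i _ => ?_
    rw [pow_add, pow_mul', hd, one_pow, one_mul]

lemma prod_one_period {η : ℂ} {d : ℕ} (hd : 0 < d) (hη : IsPrimitiveRoot η d) :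
    ∏ i ∈ Finset.range d, (1 + η ^ i) = 1 - (-1 : ℂ) ^ d := by
  have h := X_pow_sub_C_eq_prod hη hd (one_pow d)
  have h2 := congrArg (Polynomial.eval (-1 : ℂ)) h
  simp only [eval_sub, eval_pow, eval_X, eval_C, eval_prod, eval_mul, mul_one] at h2
  have key : (-1 : ℂ) ^ d * ∏ i ∈ Finset.range d, (1 + η ^ i) = (-1) ^ d - 1 := by
    have he : ∏ x ∈ Finset.range d, (-1 - η ^ x) =
        ∏ x ∈ Finset.range d, (-1 : ℂ) * (1 + η ^ x) :=
      Finset.prod_congr rfl fun i _ => by ring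
    rw [h2, he, Finset.prod_mul_distrib, Finset.prod_const, Finset.card_range]
  have hsq : (-1 : ℂ) ^ d * (-1) ^ d = 1 := by
    rw [← pow_add, ← two_mul, pow_mul]; norm_num
  calc ∏ i ∈ Finset.range d, (1 + η ^ i)
      = ((-1 : ℂ) ^ d * (-1) ^ d) * ∏ i ∈ Finset.range d, (1 + η ^ i) := by rw [hsq, one_mul]
    _ = (-1 : ℂ) ^ d * ((-1 : ℂ) ^ d * ∏ i ∈ Finset.range d, (1 + η ^ i)) := by ring
    _ = (-1 : ℂ) ^ d * ((-1 : ℂ) ^ d - 1) := by rw [key]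
    _ = (-1 : ℂ) ^ d * (-1 : ℂ) ^ d - (-1 : ℂ) ^ d := by ring
    _ = 1 - (-1 : ℂ) ^ d := by rw [hsq]

lemma orth {m : ℕ} (hm : 0 < m) {ζ : ℂ} (hζ : IsPrimitiveRoot ζ m) (k : ℕ) :
    ∑ r ∈ Finset.range m, ζ ^ (r * k) = if m ∣ k then (m : ℂ) else 0 := by
  have hform : ∀ r, ζ ^ (r * k) = (ζ ^ k) ^ r := fun r => by rw [← pow_mul, mul_comm]
  simp only [hform]
  by_cases h : m ∣ k
  · rw [if_pos h]
    have h1 : ζ ^ k = 1 := (hζ.pow_eq_one_iff_dvd k).mpr h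
    simp [h1]
  · rw [if_neg h]
    have h1 : ζ ^ k ≠ 1 := fun hc => h ((hζ.pow_eq_one_iff_dvd k).mp hc)
    rw [geom_sum_eq h1, ← pow_mul, mul_comm k m, pow_mul, hζ.pow_eq_one, one_pow, sub_self,
      zero_div]

end aux

lemma gcd_sub_self' {a d : ℕ} (h : a ≤ d) (hc : Nat.gcd a d = 1) : Nat.gcd (d - a) d = 1 := by
  have h2 := Nat.dvd_sub (Nat.gcd_dvd_right (d - a) d) (Nat.gcd_dvd_left (d - a) d)
  rw [Nat.sub_sub_self h] at h2
  exact Nat.dvd_one.mp (hc ▸ Nat.dvd_gcd h2 (Nat.gcd_dvd_right _ _))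

lemma prod_eval {m : ℕ} (hm : 0 < m) {ζ : ℂ} (hζ : IsPrimitiveRoot ζ m) (r : ℕ) :
    ∏ i ∈ Finset.range m, (1 + ζ ^ (r * i)) =
      (1 - (-1 : ℂ) ^ (m / Nat.gcd r m)) ^ (Nat.gcd r m) := by
  set g := Nat.gcd r m with hg
  set d := m / g with hd
  have hgdvd : g ∣ m := Nat.gcd_dvd_right r m
  have hgpos : 0 < g := Nat.gcd_pos_of_pos_right r hm
  have hmgd : g * d = m := Nat.mul_div_cancel' hgdvd
  have hdpos : 0 < d := Nat.div_pos (Nat.le_of_dvd hm hgdvd) hgpos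
  have hη : IsPrimitiveRoot (ζ ^ r) d := by
    rcases Nat.eq_zero_or_pos r with hr | hr
    · subst hr
      have : g = m := Nat.gcd_zero_left m
      have hd1 : d = 1 := by rw [hd, this, Nat.div_self hm]
      rw [hd1, pow_zero]
      exact IsPrimitiveRoot.one
    · have horder : orderOf (ζ ^ r) = d := by
        rw [orderOf_pow' ζ hr.ne', ← hζ.eq_orderOf, hd, hg, Nat.gcd_comm]
      exact horder ▸ IsPrimitiveRoot.orderOf (ζ ^ r)
  have hform : ∀ i, ζ ^ (r * i) = (ζ ^ r) ^ i := fun i => by rw [pow_mul]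
  simp only [hform]
  rw [← hmgd, prod_periodic hη.pow_eq_one g, prod_one_period hdpos hη]

lemma fiber_sum {m : ℕ} (hm : 0 < m) {d : ℕ} (hd : d ∣ m) (b : ℕ) (hb : b ≤ m)
    {ζ : ℂ} (hζdef : ζ = Complex.exp (2 * Real.pi * Complex.I / m)) :
    ∑ r ∈ (Finset.range m).filter (fun r => Nat.gcd r m = m / d),
      ζ ^ (r * (m - b)) = ramanujan d (b : ℤ) := by
  subst hζdef
  set ζ := Complex.exp (2 * Real.pi * Complex.I / m) with hζdef
  have hdpos : 0 < d := Nat.pos_of_dvd_of_pos hd hm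
  set g := m / d with hgdef
  have hgdvd : g ∣ m := Nat.div_dvd_of_dvd hd
  have hgd : g * d = m := Nat.div_mul_cancel hd
  have hgpos : 0 < g := Nat.div_pos (Nat.le_of_dvd hm hd) hdpos
  rw [ramanujan]
  refine Finset.sum_nbij' (fun r => d - r / g) (fun j => g * (d - j)) ?_ ?_ ?_ ?_ ?_
  · -- maps to
    intro r hr
    simp only [Finset.mem_filter, Finset.mem_range] at hr
    obtain ⟨hrm, hrg⟩ := hr
    have hgr : g ∣ r := hrg ▸ Nat.gcd_dvd_left r m
    set j' := r / g with hj'def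
    have hrgj : r = g * j' := (Nat.mul_div_cancel' hgr).symm
    have hj'd : j' < d := by
      by_contra hc
      push_neg at hc
      have : m ≤ r := by calc m = g * d := hgd.symm
                            _ ≤ g * j' := Nat.mul_le_mul_left g hc
                            _ = r := hrgj.symm
      omega
    have hcop : Nat.gcd j' d = 1 := by
      have : g * Nat.gcd j' d = g * 1 := by
        rw [mul_one, ← Nat.gcd_mul_left, ← hrgj, hgd, hrg]
      exact Nat.eq_of_mul_eq_mul_left hgpos this
    simp only [Finset.mem_filter, Finset.mem_Icc]
    clear_value j'
    exact ⟨⟨by omega, by omega⟩, gcd_sub_self' hj'd.le hcop⟩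
  · -- maps back
    intro j hj
    simp only [Finset.mem_filter, Finset.mem_Icc] at hj
    obtain ⟨⟨hj1, hjd⟩, hcop⟩ := hj
    simp only [Finset.mem_filter, Finset.mem_range]
    rcases eq_or_lt_of_le hjd with hjeq | hjlt
    · have hd1 : d = 1 := by rw [hjeq] at hcop; simpa using hcop
      rw [hjeq, Nat.sub_self, Nat.mul_zero]
      refine ⟨hm, ?_⟩
      rw [Nat.gcd_zero_left, ← hgd, hd1, mul_one]
    · constructor
      · calc g * (d - j) < g * d := (Nat.mul_lt_mul_left hgpos).mpr (by omega)
          _ = m := hgd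
      · have hcop2 : Nat.gcd (d - j) d = 1 := gcd_sub_self' hjd hcop
        rw [← hgd, Nat.gcd_mul_left, hcop2, mul_one]
  · -- left inverse
    intro r hr
    simp only [Finset.mem_filter, Finset.mem_range] at hr
    obtain ⟨hrm, hrg⟩ := hr
    have hgr : g ∣ r := hrg ▸ Nat.gcd_dvd_left r m
    have hj'd : r / g < d := by
      rcases hgr with ⟨c, hc⟩
      subst hc
      rw [Nat.mul_div_cancel_left c hgpos]
      by_contra hcon
      push_neg at hcon
      have : m ≤ g * c := by rw [← hgd]; exact Nat.mul_le_mul_left g hcon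
      omega
    show g * (d - (d - r / g)) = r
    rw [Nat.sub_sub_self hj'd.le, Nat.mul_div_cancel' hgr]
  · -- right inverse
    intro j hj
    simp only [Finset.mem_filter, Finset.mem_Icc] at hj
    show d - g * (d - j) / g = j
    rw [Nat.mul_div_cancel_left _ hgpos, Nat.sub_sub_self hj.1.2]
  · -- values
    intro r hr
    simp only [Finset.mem_filter, Finset.mem_range] at hr
    obtain ⟨hrm, hrg⟩ := hr
    have hgr : g ∣ r := hrg ▸ Nat.gcd_dvd_left r m
    set j' := r / g with hj'def
    have hrgj : r = g * j' := (Nat.mul_div_cancel' hgr).symm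
    have hj'd : j' < d := by
      by_contra hc
      push_neg at hc
      have : m ≤ r := by calc m = g * d := hgd.symm
                            _ ≤ g * j' := Nat.mul_le_mul_left g hc
                            _ = r := hrgj.symm
      omega
    rw [← Complex.exp_nat_mul]
    rw [Complex.exp_eq_exp_iff_exists_int]
    refine ⟨(j' : ℤ) * g - b, ?_⟩
    have hmC : (m : ℂ) ≠ 0 := Nat.cast_ne_zero.mpr hm.ne'
    have hdC : (d : ℂ) ≠ 0 := Nat.cast_ne_zero.mpr hdpos.ne'
    have c1 : ((m - b : ℕ) : ℂ) = (m : ℂ) - b := by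
      push_cast [Nat.cast_sub hb]; ring
    have c2 : ((d - j' : ℕ) : ℂ) = (d : ℂ) - j' := by
      push_cast [Nat.cast_sub hj'd.le]; ring
    have c3 : (r : ℂ) = (g : ℂ) * j' := by exact_mod_cast congrArg (Nat.cast : ℕ → ℂ) hrgj
    have c4 : (m : ℂ) = (g : ℂ) * d := by exact_mod_cast congrArg (Nat.cast : ℕ → ℂ) hgd.symm
    have hgC : (g : ℂ) ≠ 0 := Nat.cast_ne_zero.mpr hgpos.ne'
    push_cast [c1, c2, c3]
    rw [c4]
    field_simp
    ring


theorem stmt_14 (n : ℕ) (hn : 1 ≤ n) (b : ℕ) (hb : b ≤ n) :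
    ((VT n b).card : ℂ) =
      (1 / (2 * (n + 1))) *
        ∑ d ∈ (n + 1).divisors.filter (fun d => Odd d), ramanujan d b * 2 ^ ((n + 1) / d) := by
  set m := n + 1 with hm
  have hmpos : 0 < m := by omega
  have hbm : b < m := by omega
  set ζ := Complex.exp (2 * Real.pi * Complex.I / m) with hζdef
  have hζ : IsPrimitiveRoot ζ m := Complex.isPrimitiveRoot_exp m hmpos.ne'
  -- membership criterion
  have key : ∀ k : ℕ, m ∣ (k + (m - b)) ↔ k % m = b := by
    intro k
    have hm0 : m ≡ 0 [MOD m] := Nat.modEq_zero_iff_dvd.mpr dvd_rfl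
    have hb' : b + (m - b) = m := by omega
    constructor
    · intro hdvd
      have h1 : k + (m - b) ≡ 0 [MOD m] := Nat.modEq_zero_iff_dvd.mpr hdvd
      have h2 : k + (m - b) ≡ b + (m - b) [MOD m] := by rw [hb']; exact h1.trans hm0.symm
      have h3 : k ≡ b [MOD m] := Nat.ModEq.add_right_cancel' (m - b) h2
      have h4 : k % m = b % m := h3
      rwa [Nat.mod_eq_of_lt hbm] at h4
    · intro h
      have h3 : k ≡ b [MOD m] := by
        show k % m = b % m
        rw [h, Nat.mod_eq_of_lt hbm]
      have h2 := h3.add_right (m - b)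
      rw [hb'] at h2
      exact Nat.modEq_zero_iff_dvd.mp (h2.trans hm0)
  -- Step A: m * card as double sum
  have stepA : (m : ℂ) * (VT n b).card =
      ∑ s : Fin n → Fin 2, ∑ r ∈ Finset.range m,
        ζ ^ (r * ((∑ i : Fin n, (i.val + 1) * (s i).val) + (m - b))) := by
    have h1 : ∀ s : Fin n → Fin 2,
        ∑ r ∈ Finset.range m,
          ζ ^ (r * ((∑ i : Fin n, (i.val + 1) * (s i).val) + (m - b))) =
        if (∑ i : Fin n, (i.val + 1) * (s i).val) % m = b then (m : ℂ) else 0 := by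
      intro s
      rw [orth hmpos hζ]
      simp only [key]
    rw [Finset.sum_congr rfl (fun s _ => h1 s), Finset.sum_ite, Finset.sum_const,
      Finset.sum_const_zero, add_zero, nsmul_eq_mul, mul_comm]
    congr 1
  -- Step B: inner sum factorization
  have stepB : ∀ r : ℕ,
      ∑ s : Fin n → Fin 2,
        ζ ^ (r * ((∑ i : Fin n, (i.val + 1) * (s i).val) + (m - b))) =
      ζ ^ (r * (m - b)) * ((∏ i ∈ Finset.range m, (1 + ζ ^ (r * i))) / 2) := by
    intro r
    have h1 : ∀ s : Fin n → Fin 2,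
        ζ ^ (r * ((∑ i : Fin n, (i.val + 1) * (s i).val) + (m - b))) =
        ζ ^ (r * (m - b)) * ∏ i : Fin n, (ζ ^ (r * (i.val + 1))) ^ ((s i).val) := by
      intro s
      rw [Nat.mul_add, pow_add, mul_comm (ζ ^ (r * _)), Finset.mul_sum,
        ← Finset.prod_pow_eq_pow_sum]
      congr 1
      refine Finset.prod_congr rfl fun i _ => ?_
      rw [← pow_mul, mul_assoc]
    rw [Finset.sum_congr rfl (fun s _ => h1 s), ← Finset.mul_sum]
    congr 1
    have h2 := (Fintype.prod_sum (fun (i : Fin n) (v : Fin 2) => (ζ ^ (r * (i.val + 1))) ^ (v.val))).symm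
    rw [h2]
    have h3 : ∀ i : Fin n, ∑ v : Fin 2, (ζ ^ (r * (i.val + 1))) ^ (v.val) =
        1 + ζ ^ (r * (i.val + 1)) := by
      intro i
      rw [Fin.sum_univ_two]
      simp
    rw [Finset.prod_congr rfl (fun i _ => h3 i)]
    -- now: ∏ i : Fin n, (1 + ζ^(r*(i+1))) = (∏ i ∈ range m, (1 + ζ^(r*i))) / 2
    rw [eq_div_iff (two_ne_zero), hm]
    rw [Finset.prod_range_succ' (fun i => 1 + ζ ^ (r * i)) n]
    rw [← Finset.prod_range (fun i => 1 + ζ ^ (r * (i + 1)))]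
    norm_num
  -- Step C
  have stepC : (m : ℂ) * (VT n b).card = ∑ r ∈ Finset.range m,
      ζ ^ (r * (m - b)) * ((1 - (-1 : ℂ) ^ (m / Nat.gcd r m)) ^ (Nat.gcd r m) / 2) := by
    rw [stepA, Finset.sum_comm]
    refine Finset.sum_congr rfl fun r _ => ?_
    rw [stepB r, prod_eval hmpos hζ r]
  -- Step D: group by d
  have hmapsto : ∀ r ∈ Finset.range m, m / Nat.gcd r m ∈ m.divisors := fun r _ =>
    Nat.mem_divisors.mpr ⟨Nat.div_dvd_of_dvd (Nat.gcd_dvd_right r m), hmpos.ne'⟩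
  have grp := Finset.sum_fiberwise_of_maps_to hmapsto
    (fun r => ζ ^ (r * (m - b)) * ((1 - (-1 : ℂ) ^ (m / Nat.gcd r m)) ^ (Nat.gcd r m) / 2))
  have stepD : (m : ℂ) * (VT n b).card =
      ∑ d ∈ m.divisors, ramanujan d b * ((1 - (-1 : ℂ) ^ d) ^ (m / d) / 2) := by
    rw [stepC, ← grp]
    refine Finset.sum_congr rfl fun d hd => ?_
    obtain ⟨hddvd, -⟩ := Nat.mem_divisors.mp hd
    have hdpos : 0 < d := Nat.pos_of_dvd_of_pos hddvd hmpos
    have hfil : (Finset.range m).filter (fun r => m / Nat.gcd r m = d) =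
        (Finset.range m).filter (fun r => Nat.gcd r m = m / d) := by
      apply Finset.filter_congr
      intro r _
      constructor
      · intro h
        have h2 : Nat.gcd r m * d = m := by
          rw [← h]; exact Nat.mul_div_cancel' (Nat.gcd_dvd_right r m)
        exact (Nat.div_eq_of_eq_mul_left hdpos h2.symm).symm
      · intro h
        rw [h, Nat.div_div_self hddvd hmpos.ne']
    have hterm : ∀ r ∈ (Finset.range m).filter (fun r => Nat.gcd r m = m / d),
        ζ ^ (r * (m - b)) * ((1 - (-1 : ℂ) ^ (m / Nat.gcd r m)) ^ (Nat.gcd r m) / 2) =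
        ζ ^ (r * (m - b)) * ((1 - (-1 : ℂ) ^ d) ^ (m / d) / 2) := by
      intro r hr
      obtain ⟨-, hr2⟩ := Finset.mem_filter.mp hr
      rw [hr2, Nat.div_div_self hddvd hmpos.ne']
    rw [hfil, Finset.sum_congr rfl hterm, ← Finset.sum_mul,
      fiber_sum hmpos hddvd b (by omega) hζdef]
  -- Step E: restrict to odd divisors
  have hvanish : ∀ d ∈ m.divisors,
      ramanujan d b * ((1 - (-1 : ℂ) ^ d) ^ (m / d) / 2) ≠ 0 → Odd d := by
    intro d hd hne
    by_contra heven
    rw [Nat.not_odd_iff_even] at heven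
    obtain ⟨hddvd, -⟩ := Nat.mem_divisors.mp hd
    have hdpos : 0 < d := Nat.pos_of_dvd_of_pos hddvd hmpos
    have hmd : 0 < m / d := Nat.div_pos (Nat.le_of_dvd hmpos hddvd) hdpos
    rw [heven.neg_one_pow] at hne
    simp [zero_pow hmd.ne'] at hne
  have stepE : ∑ d ∈ m.divisors, ramanujan d b * ((1 - (-1 : ℂ) ^ d) ^ (m / d) / 2) =
      ∑ d ∈ m.divisors.filter (fun d => Odd d),
        ramanujan d b * ((2 : ℂ) ^ (m / d) / 2) := by
    rw [← Finset.sum_filter_of_ne hvanish]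
    refine Finset.sum_congr rfl fun d hd => ?_
    have hodd : Odd d := (Finset.mem_filter.mp hd).2
    rw [hodd.neg_one_pow]
    norm_num
  -- conclude
  have final := stepD.trans stepE
  have hmC : (m : ℂ) ≠ 0 := Nat.cast_ne_zero.mpr hmpos.ne'
  have hnm : ((n : ℂ) + 1) = (m : ℂ) := by rw [hm]; push_cast; ring
  rw [hnm]
  calc ((VT n b).card : ℂ)
      = (1 / (m : ℂ)) * ((m : ℂ) * (VT n b).card) := by field_simp
    _ = (1 / (m : ℂ)) * ∑ d ∈ m.divisors.filter (fun d => Odd d),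
          ramanujan d b * ((2 : ℂ) ^ (m / d) / 2) := by rw [final]
    _ = (1 / (2 * (m : ℂ))) * ∑ d ∈ m.divisors.filter (fun d => Odd d),
          ramanujan d b * (2 : ℂ) ^ (m / d) := by
        rw [Finset.mul_sum, Finset.mul_sum]
        refine Finset.sum_congr rfl fun d hd => ?_
        ring
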